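/- Let q ≡ 1 (mod 4) be an odd prime power and let a, b ∈ F_q be nonzero with ba⁻¹ a nonsquare in F_q. Then the point ⟨(a,b,0)⟩ is H-free. -/

import Mathlib

noncomputable section

/-- Three points of PG(2,q) are collinear if they have linearly dependent representatives. -/
def Coll3 {F : Type*} [Field F] (P Q R : Projectivization F (Fin 3 → F)) : Prop :=
  ¬ LinearIndependent F ![P.rep, Q.rep, R.rep]

/-- A point is `S`-covered if it lies on a line through two distinct points of `S`. -/
def PGCovered {F : Type*} [Field F] (S : Set (Projectivization F (Fin 3 → F)))
    (P : Projectivization F (Fin 3 → F)) : Prop :=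
  ∃ Q ∈ S, ∃ R ∈ S, Q ≠ R ∧ Coll3 P Q R

/-- A point not in `S` is `S`-free if it is not `S`-covered. -/
def PGFree {F : Type*} [Field F] (S : Set (Projectivization F (Fin 3 → F)))
    (P : Projectivization F (Fin 3 → F)) : Prop :=
  P ∉ S ∧ ¬ PGCovered S P

lemma vec_ne_zero {F : Type*} [Field F] (v : Fin 3 → F) (i : Fin 3) (h : v i ≠ 0) : v ≠ 0 :=
  fun hv => h (by simp [hv])

/-- The set `H = {⟨(1,s⁴,s²)⟩ : s ∈ F}` of points of PG(2,q). -/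
def HSet (F : Type*) [Field F] : Set (Projectivization F (Fin 3 → F)) :=
  {P | ∃ s : F, P = Projectivization.mk F ![1, s ^ 4, s ^ 2] (vec_ne_zero _ 0 (by simp))}

/-- The conic `C : XY = Z²` in PG(2,q).  (Membership does not depend on the choice of
representative since the equation is homogeneous.) -/
def conicC (F : Type*) [Field F] : Set (Projectivization F (Fin 3 → F)) :=
  {P | P.rep 0 * P.rep 1 = P.rep 2 ^ 2}

/-- An arc: a set of points no three of which are collinear. -/
def IsPGArc {F : Type*} [Field F] (S : Set (Projectivization F (Fin 3 → F))) : Prop :=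
  ∀ P ∈ S, ∀ Q ∈ S, ∀ R ∈ S, P ≠ Q → P ≠ R → Q ≠ R → ¬ Coll3 P Q R

/-- A complete arc: an arc which cannot be extended to a larger arc. -/
def IsCompletePGArc {F : Type*} [Field F] (S : Set (Projectivization F (Fin 3 → F))) : Prop :=
  IsPGArc S ∧ ∀ P ∉ S, ¬ IsPGArc (insert P S)

/-! A secant of `H` through `⟨(1,s⁴,s²)⟩` and `⟨(1,t⁴,t²)⟩` contains `⟨(a,b,0)⟩` exactly when
`(s² - t²)(a(st)² + b) = 0`. Distinct points of `H` have `s² ≠ t²`, so `b a⁻¹ = -(st)²`, which is a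
square because `-1` is a square when `q ≡ 1 (mod 4)`. -/

open Projectivization

lemma coll3_mk_iff_det_eq_zero {F : Type*} [Field F] {u v w : Fin 3 → F}
    (hu : u ≠ 0) (hv : v ≠ 0) (hw : w ≠ 0) :
    Coll3 (mk F u hu) (mk F v hv) (mk F w hw) ↔ (Matrix.of ![u, v, w]).det = 0 := by
  obtain ⟨cu, hcu⟩ := exists_smul_eq_mk_rep F u hu
  obtain ⟨cv, hcv⟩ := exists_smul_eq_mk_rep F v hv
  obtain ⟨cw, hcw⟩ := exists_smul_eq_mk_rep F w hw
  have hreps : ![(mk F u hu).rep, (mk F v hv).rep, (mk F w hw).rep] =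
      ![cu, cv, cw] • (Matrix.of ![u, v, w]).row := by
    funext i
    fin_cases i <;> simp [← hcu, ← hcv, ← hcw]
  rw [Coll3, hreps, LinearIndependent.units_smul_iff, Matrix.linearIndependent_rows_iff_isUnit,
    Matrix.isUnit_iff_isUnit_det, isUnit_iff_ne_zero, not_not]

lemma mk_notMem_HSet {F : Type*} [Field F] {v : Fin 3 → F} (hv : v ≠ 0)
    (h1 : v 1 ≠ 0) (h2 : v 2 = 0) : mk F v hv ∉ HSet F := by
  rintro ⟨s, hs⟩
  obtain ⟨c, hc⟩ := (mk_eq_mk_iff F _ _ _ _).1 hs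
  have hcs2 : (c : F) * s ^ 2 = 0 := by simpa [Units.smul_def, h2] using congrFun hc 2
  have hs : s = 0 := by simpa using hcs2
  exact h1 (by simpa [Units.smul_def, hs, eq_comm] using congrFun hc 1)

lemma sq_ne_sq_of_HSet_ne {F : Type*} [Field F] {s t : F}
    (h : mk F ![1, s ^ 4, s ^ 2] (vec_ne_zero _ 0 (by simp)) ≠
      mk F ![1, t ^ 4, t ^ 2] (vec_ne_zero _ 0 (by simp))) : s ^ 2 ≠ t ^ 2 := by
  intro hst
  have h4 : s ^ 4 = t ^ 4 := by
    rw [show 4 = 2 * 2 from rfl, pow_mul, pow_mul, hst]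
  exact h (by simp_rw [hst, h4])

lemma det_HSet_secant {F : Type*} [Field F] (a b s t : F) :
    (Matrix.of ![![a, b, 0], ![1, s ^ 4, s ^ 2], ![1, t ^ 4, t ^ 2]]).det =
      (s ^ 2 - t ^ 2) * (a * (s * t) ^ 2 + b) := by
  simp only [Matrix.det_fin_three, Matrix.of_apply, Matrix.cons_val', Matrix.cons_val_zero,
    Matrix.cons_val_fin_one, Matrix.cons_val_one, Matrix.cons_val]
  ring

lemma isSquare_mul_inv_of_mul_sq_add_eq_zero {F : Type*} [Field F] (hneg : IsSquare (-1 : F))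
    {a b x : F} (ha : a ≠ 0) (h : a * x ^ 2 + b = 0) : IsSquare (b * a⁻¹) := by
  have hb : b * a⁻¹ = -1 * x ^ 2 := by
    rw [eq_neg_of_add_eq_zero_right h]
    field_simp
  rw [hb]
  exact hneg.mul (.sq x)

/-- for `q ≡ 1 (mod 4)`, if `b·a⁻¹` is a nonsquare then `⟨(a,b,0)⟩` is `H`-free. -/
theorem stmt9 (F : Type*) [Field F] [Fintype F] (q : ℕ) (hcard : Fintype.card F = q)
    (hq1 : q % 4 = 1) (a b : F) (ha : a ≠ 0)
    (hnsq : ¬ IsSquare (b * a⁻¹)) :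
    PGFree (HSet F)
      (Projectivization.mk F ![a, b, 0] (vec_ne_zero _ 0 (by simpa using ha))) := by
  have hneg : IsSquare (-1 : F) := by
    rw [FiniteField.isSquare_neg_one_iff, hcard, hq1]
    decide
  have hb : b ≠ 0 := by
    rintro rfl
    exact hnsq (by simp)
  refine ⟨mk_notMem_HSet _ (by simpa using hb) rfl, ?_⟩
  rintro ⟨_, ⟨s, rfl⟩, _, ⟨t, rfl⟩, hst, hcoll⟩
  rw [coll3_mk_iff_det_eq_zero, det_HSet_secant] at hcoll
  rcases mul_eq_zero.1 hcoll with h | h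
  · exact sq_ne_sq_of_HSet_ne hst (sub_eq_zero.1 h)
  · exact hnsq (isSquare_mul_inv_of_mul_sq_add_eq_zero hneg ha h)
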